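/- arXiv:2104.14267 — 4 statements merged into one kernel-verified Lean document; each statement's English description precedes it below -/
import Mathlib

section
/- Let J : ℝ² → ℝ be twice continuously differentiable, strictly concave on ℝ², radially unbounded (J(p) → −∞ as ‖p‖ → ∞), and attain its global maximum at p* = (z1*, z2*). Then every solution t ↦ (z1(t), z2(t), z3(t), z4(t)) of the closed-loop system that is defined for all t ≥ 0 and satisfies z3(0)² + z4(0)² = 1 converges to the source: (z1(t), z2(t)) → (z1*, z2*) as t → ∞. -/
/-!
Along a solution, `J (z1, z2)` is nondecreasing with derivative `k1 ⟨∇J, v⟩²`, where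
`v = (z3, z4)` stays on the unit circle. Hence the position stays in a compact superlevel set of
`J`, `J (z1, z2)` converges, and Barbalat's lemma gives `⟨∇J, v⟩ → 0`. The derivative of
`⟨∇J, v⟩` is `k1 ⟨∇J, v⟩ ∇²J(v, v) - k2 ⟨∇J⊥, v⟩²`, whose first term tends to `0`, so Barbalat's
lemma applied to `⟨∇J, v⟩` gives `⟨∇J⊥, v⟩ → 0`. Thus `‖∇J‖ → 0` along the trajectory, and on a
compact set this forces convergence to the unique critical point of the strictly concave `J`,
which is its maximiser `pstar`.
-/

open Real Filter

/-- First component of the gradient of `J : ℝ² → ℝ`, i.e. `∂J/∂z1`. -/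
noncomputable def gradJ1 (J : ℝ × ℝ → ℝ) (p : ℝ × ℝ) : ℝ := fderiv ℝ J p (1, 0)

/-- Second component of the gradient of `J : ℝ² → ℝ`, i.e. `∂J/∂z2`. -/
noncomputable def gradJ2 (J : ℝ × ℝ → ℝ) (p : ℝ × ℝ) : ℝ := fderiv ℝ J p (0, 1)

/-- The closed-loop unicycle system under the projected gradient-ascent control law:
`ż1 = k1⟨∇J,(z3,z4)⟩ z3`, `ż2 = k1⟨∇J,(z3,z4)⟩ z4`,
`ż3 = k2⟨∇J⊥,(z3,z4)⟩ z4`, `ż4 = −k2⟨∇J⊥,(z3,z4)⟩ z3`,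
where `∇J⊥ = (∂J/∂z2, −∂J/∂z1)` and the equations hold for all `t ∈ s`. -/
def ClosedLoop (J : ℝ × ℝ → ℝ) (k1 k2 : ℝ) (z1 z2 z3 z4 : ℝ → ℝ) (s : Set ℝ) : Prop :=
  ∀ t ∈ s,
    HasDerivAt z1
      (k1 * (gradJ1 J (z1 t, z2 t) * z3 t + gradJ2 J (z1 t, z2 t) * z4 t) * z3 t) t ∧
    HasDerivAt z2
      (k1 * (gradJ1 J (z1 t, z2 t) * z3 t + gradJ2 J (z1 t, z2 t) * z4 t) * z4 t) t ∧
    HasDerivAt z3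
      (k2 * (gradJ2 J (z1 t, z2 t) * z3 t - gradJ1 J (z1 t, z2 t) * z4 t) * z4 t) t ∧
    HasDerivAt z4
      (-(k2 * (gradJ2 J (z1 t, z2 t) * z3 t - gradJ1 J (z1 t, z2 t) * z4 t)) * z3 t) t

open Set Topology

/-- Barbalat's lemma, allowing a perturbation `r` of the derivative that tends to `0`. -/
theorem tendsto_zero_of_hasDerivAt_add_of_uniformContinuousOn {φ r g : ℝ → ℝ} {a L : ℝ}
    (hφ : Tendsto φ atTop (𝓝 L)) (hr : Tendsto r atTop (𝓝 0))
    (hg : UniformContinuousOn g (Ici a))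
    (hφ' : ∀ t ∈ Ici a, HasDerivAt φ (r t + g t) t) :
    Tendsto g atTop (𝓝 0) := by
  rw [Metric.tendsto_atTop]
  intro ε hε
  obtain ⟨δ, hδ, hgδ⟩ := Metric.uniformContinuousOn_iff.1 hg (ε / 2) (half_pos hε)
  set h := δ / 2 with h_def
  have hh : 0 < h := half_pos hδ
  have hincr : Tendsto (fun t => φ (t + h) - φ t) atTop (𝓝 0) := by
    simpa using (hφ.comp (tendsto_atTop_add_const_right _ h tendsto_id)).sub hφ
  obtain ⟨T₁, hT₁⟩ := Metric.tendsto_atTop.1 hr (ε / 4) (by positivity)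
  obtain ⟨T₂, hT₂⟩ := Metric.tendsto_atTop.1 hincr (ε / 4 * h) (by positivity)
  refine ⟨max (max T₁ T₂) a, fun t ht => ?_⟩
  simp only [max_le_iff] at ht
  obtain ⟨⟨htT₁, htT₂⟩, hta⟩ := ht
  by_contra! hgt
  obtain ⟨c, ⟨htc, hch⟩, hc⟩ := exists_hasDerivAt_eq_slope φ (fun s => r s + g s)
    (lt_add_of_pos_right t hh)
    (fun s hs => (hφ' s (hta.trans hs.1)).continuousAt.continuousWithinAt)
    (fun s hs => hφ' s (hta.trans hs.1.le))
  have hgc : dist (g c) (g t) < ε / 2 :=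
    hgδ c (hta.trans htc.le) t hta (by rw [Real.dist_eq, abs_lt]; constructor <;> linarith)
  have hrc : |r c| < ε / 4 := by simpa using hT₁ c (by linarith)
  have hφt : |φ (t + h) - φ t| < ε / 4 * h := by simpa using hT₂ t htT₂
  rw [Real.dist_eq, sub_zero] at hgt
  rw [Real.dist_eq] at hgc
  have hslope : ε / 4 < |r c + g c| := by
    have h₁ := abs_sub_abs_le_abs_sub (g t) (g c)
    have h₂ : |g c| - |r c| ≤ |r c + g c| := by
      simpa [add_comm] using abs_sub_abs_le_abs_sub (g c) (-r c)
    rw [abs_sub_comm] at h₁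
    linarith
  rw [hc, add_sub_cancel_left, abs_div, abs_of_pos hh, lt_div_iff₀ hh] at hslope
  linarith

theorem isCompact_setOf_le_of_tendsto_cocompact_atBot {X β : Type*} [TopologicalSpace X]
    [LinearOrder β] [TopologicalSpace β] [OrderClosedTopology β] [NoMinOrder β]
    {f : X → β} (hf : Continuous f) (hlim : Tendsto f (cocompact X) atBot) (c : β) :
    IsCompact {x | c ≤ f x} := by
  obtain ⟨K, hK, hKc⟩ := mem_cocompact.1 (hlim.eventually (eventually_lt_atBot c))
  refine hK.of_isClosed_subset (isClosed_le continuous_const hf) fun x hx => ?_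
  by_contra hxK
  exact (hKc hxK).not_ge hx

theorem ConcaveOn.isMaxOn_of_hasFDerivAt_eq_zero {E : Type*} [NormedAddCommGroup E]
    [NormedSpace ℝ E] {s : Set E} {f : E → ℝ} {x : E} (hf : ConcaveOn ℝ s f) (hx : x ∈ s)
    (hfx : HasFDerivAt f (0 : E →L[ℝ] ℝ) x) : IsMaxOn f s x := by
  intro y hy
  let ℓ : ℝ →ᵃ[ℝ] E := AffineMap.lineMap x y
  have hline : ConcaveOn ℝ (ℓ ⁻¹' s) (f ∘ ℓ) := hf.comp_affineMap ℓ
  have hℓ0 : ℓ 0 = x := AffineMap.lineMap_apply_zero x y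
  have hℓ1 : ℓ 1 = y := AffineMap.lineMap_apply_one x y
  have hderiv : HasDerivAt (f ∘ ℓ) 0 0 := by
    simpa using (hℓ0 ▸ hfx).comp_hasDerivAt (0 : ℝ) (AffineMap.hasDerivAt_lineMap (𝕜 := ℝ))
  have := hline.slope_le_of_hasDerivAt (by simpa [hℓ0] using hx) (by simpa [hℓ1] using hy)
    one_pos hderiv
  simpa [slope_def_field, hℓ0, hℓ1] using this

theorem uniformContinuousOn_comp_of_hasDerivAt_of_isCompact {E F : Type*}
    [NormedAddCommGroup E] [NormedSpace ℝ E] [UniformSpace F] {V : E → E} {γ : ℝ → E}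
    {S : Set E} {a : ℝ} (hS : IsCompact S) (hV : ContinuousOn V S) (hγS : MapsTo γ (Ici a) S)
    (hγ : ∀ t ∈ Ici a, HasDerivAt γ (V (γ t)) t) {G : E → F} (hG : ContinuousOn G S) :
    UniformContinuousOn (G ∘ γ) (Ici a) := by
  obtain ⟨C, hC⟩ := hS.exists_bound_of_continuousOn hV
  have hlip : LipschitzOnWith C.toNNReal γ (Ici a) :=
    (convex_Ici a).lipschitzOnWith_of_nnnorm_hasDerivWithin_le
      (fun t ht => (hγ t ht).hasDerivWithinAt) fun t ht => by
        rw [← NNReal.coe_le_coe, coe_nnnorm]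
        exact (hC _ (hγS ht)).trans (Real.le_coe_toNNReal C)
  exact (hS.uniformContinuousOn_of_continuous hG).comp hlip.uniformContinuousOn hγS

theorem MonotoneOn.exists_tendsto_atTop_of_bddAbove {f : ℝ → ℝ} {a : ℝ}
    (hf : MonotoneOn f (Ici a)) (hb : BddAbove (range f)) : ∃ L, Tendsto f atTop (𝓝 L) := by
  have hmono : Monotone fun t => f (max t a) := fun s t hst =>
    hf (le_max_right s a) (le_max_right t a) (max_le_max_right a hst)
  refine ⟨_, (tendsto_atTop_ciSup hmono (hb.mono (range_comp_subset_range _ f))).congr' ?_⟩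
  filter_upwards [eventually_ge_atTop a] with t ht
  rw [max_eq_left ht]

theorem tendsto_zero_of_tendsto_const_mul_sq {α : Type*} {l : Filter α} {f : α → ℝ} {c : ℝ}
    (hc : c ≠ 0) (h : Tendsto (fun t => c * f t ^ 2) l (𝓝 0)) : Tendsto f l (𝓝 0) := by
  have hsq : Tendsto (fun t => f t ^ 2) l (𝓝 0) := by
    simpa [hc] using h.const_mul c⁻¹
  exact (tendsto_zero_iff_abs_tendsto_zero f).2
    (by simpa [Function.comp_def, Real.sqrt_sq_eq_abs] using hsq.sqrt)

theorem HasDerivAt.fst {E F : Type*} [NormedAddCommGroup E] [NormedSpace ℝ E]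
    [NormedAddCommGroup F] [NormedSpace ℝ F] {f : ℝ → E × F} {f' : E × F} {x : ℝ}
    (h : HasDerivAt f f' x) : HasDerivAt (fun t => (f t).1) f'.1 x :=
  (hasFDerivAt_fst (p := f x)).comp_hasDerivAt (f := f) x h

theorem HasDerivAt.snd {E F : Type*} [NormedAddCommGroup E] [NormedSpace ℝ E]
    [NormedAddCommGroup F] [NormedSpace ℝ F] {f : ℝ → E × F} {f' : E × F} {x : ℝ}
    (h : HasDerivAt f f' x) : HasDerivAt (fun t => (f t).2) f'.2 x :=
  (hasFDerivAt_snd (p := f x)).comp_hasDerivAt (f := f) x h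

theorem norm_le_one_of_sq_add_sq_eq_one {a b : ℝ} (h : a ^ 2 + b ^ 2 = 1) : ‖(a, b)‖ ≤ 1 :=
  max_le ((sq_le_one_iff_abs_le_one a).1 (by nlinarith [sq_nonneg b]))
    ((sq_le_one_iff_abs_le_one b).1 (by nlinarith [sq_nonneg a]))

theorem fderiv_apply_eq_gradJ (J : ℝ × ℝ → ℝ) (p : ℝ × ℝ) (a b : ℝ) :
    fderiv ℝ J p (a, b) = a * gradJ1 J p + b * gradJ2 J p := by
  have hab : ((a, b) : ℝ × ℝ) = a • ((1 : ℝ), (0 : ℝ)) + b • ((0 : ℝ), (1 : ℝ)) := by simp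
  rw [hab, map_add, map_smul, map_smul, smul_eq_mul, smul_eq_mul, gradJ1, gradJ2]

theorem fderiv_eq_zero_of_gradJ_eq_zero {J : ℝ × ℝ → ℝ} {p : ℝ × ℝ} (h₁ : gradJ1 J p = 0)
    (h₂ : gradJ2 J p = 0) : fderiv ℝ J p = 0 :=
  ContinuousLinearMap.ext fun ⟨a, b⟩ => by simp [fderiv_apply_eq_gradJ, h₁, h₂]

theorem tendsto_of_tendsto_gradJ_sq_add_sq {α : Type*} {l : Filter α} {J : ℝ × ℝ → ℝ}
    (hJ : ContDiff ℝ 1 J) (hconc : StrictConcaveOn ℝ univ J) {pstar : ℝ × ℝ}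
    (hmax : ∀ p, J p ≤ J pstar) {K : Set (ℝ × ℝ)} (hK : IsCompact K) {p : α → ℝ × ℝ}
    (hpK : ∀ᶠ t in l, p t ∈ K)
    (hgrad : Tendsto (fun t => gradJ1 J (p t) ^ 2 + gradJ2 J (p t) ^ 2) l (𝓝 0)) :
    Tendsto p l (𝓝 pstar) := by
  have hgradJ (v : ℝ × ℝ) : Continuous fun q => fderiv ℝ J q v :=
    (hJ.continuous_fderiv one_ne_zero).clm_apply continuous_const
  refine hK.tendsto_nhds_of_unique_mapClusterPt hpK fun x _ hx => ?_
  obtain ⟨U, hUl, hpU⟩ := mapClusterPt_iff_ultrafilter.1 hx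
  have hx0 : gradJ1 J x ^ 2 + gradJ2 J x ^ 2 = 0 :=
    tendsto_nhds_unique
      ((((hgradJ (1, 0)).pow 2).add ((hgradJ (0, 1)).pow 2)).continuousAt.tendsto.comp hpU)
      (hgrad.mono_left hUl)
  obtain ⟨h₁, h₂⟩ := (add_eq_zero_iff_of_nonneg (sq_nonneg _) (sq_nonneg _)).1 hx0
  have hcrit : fderiv ℝ J x = 0 :=
    fderiv_eq_zero_of_gradJ_eq_zero (pow_eq_zero_iff two_ne_zero |>.1 h₁)
      (pow_eq_zero_iff two_ne_zero |>.1 h₂)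
  have hxmax : IsMaxOn J univ x := hconc.concaveOn.isMaxOn_of_hasFDerivAt_eq_zero (mem_univ x)
    (hcrit ▸ (hJ.differentiable one_ne_zero x).hasFDerivAt)
  exact hconc.eq_of_isMaxOn hxmax (fun q _ => hmax q) (mem_univ x) (mem_univ pstar)

/-- At a state `x = (p, v)`, `headingDeriv J x = ⟨∇J(p), v⟩` and
`normalDeriv J x = ⟨∇J⊥(p), v⟩`. -/
noncomputable def headingDeriv (J : ℝ × ℝ → ℝ) (x : (ℝ × ℝ) × (ℝ × ℝ)) : ℝ :=
  fderiv ℝ J x.1 x.2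

noncomputable def normalDeriv (J : ℝ × ℝ → ℝ) (x : (ℝ × ℝ) × (ℝ × ℝ)) : ℝ :=
  fderiv ℝ J x.1 (-x.2.2, x.2.1)

noncomputable def unicycleField (J : ℝ × ℝ → ℝ) (k1 k2 : ℝ) (x : (ℝ × ℝ) × (ℝ × ℝ)) :
    (ℝ × ℝ) × (ℝ × ℝ) :=
  ((k1 * headingDeriv J x) • x.2, (k2 * normalDeriv J x) • (x.2.2, -x.2.1))

theorem ClosedLoop.hasDerivAt_unicycleField {J : ℝ × ℝ → ℝ} {k1 k2 : ℝ} {z1 z2 z3 z4 : ℝ → ℝ}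
    {s : Set ℝ} (hsol : ClosedLoop J k1 k2 z1 z2 z3 z4 s) {t : ℝ} (ht : t ∈ s) :
    HasDerivAt (fun t => ((z1 t, z2 t), (z3 t, z4 t)))
      (unicycleField J k1 k2 ((z1 t, z2 t), (z3 t, z4 t))) t := by
  obtain ⟨h₁, h₂, h₃, h₄⟩ := hsol t ht
  convert (h₁.prodMk h₂).prodMk (h₃.prodMk h₄) using 1
  simp only [unicycleField, headingDeriv, normalDeriv, fderiv_apply_eq_gradJ, Prod.smul_mk,
    smul_eq_mul, Prod.mk.injEq]
  refine ⟨⟨?_, ?_⟩, ?_, ?_⟩ <;> ring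

theorem continuous_headingDeriv {J : ℝ × ℝ → ℝ} (hJ : ContDiff ℝ 1 J) :
    Continuous (headingDeriv J) :=
  ((hJ.continuous_fderiv one_ne_zero).comp continuous_fst).clm_apply continuous_snd

theorem continuous_normalDeriv {J : ℝ × ℝ → ℝ} (hJ : ContDiff ℝ 1 J) :
    Continuous (normalDeriv J) :=
  ((hJ.continuous_fderiv one_ne_zero).comp continuous_fst).clm_apply (by fun_prop)

theorem continuous_unicycleField {J : ℝ × ℝ → ℝ} (hJ : ContDiff ℝ 1 J) (k1 k2 : ℝ) :
    Continuous (unicycleField J k1 k2) := by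
  have := continuous_headingDeriv hJ
  have := continuous_normalDeriv hJ
  unfold unicycleField
  fun_prop

theorem gradJ_sq_add_sq_eq (J : ℝ × ℝ → ℝ) (p : ℝ × ℝ) {a b : ℝ} (hab : a ^ 2 + b ^ 2 = 1) :
    gradJ1 J p ^ 2 + gradJ2 J p ^ 2 =
      headingDeriv J (p, (a, b)) ^ 2 + normalDeriv J (p, (a, b)) ^ 2 := by
  simp only [headingDeriv, normalDeriv, fderiv_apply_eq_gradJ]
  linear_combination -(gradJ1 J p ^ 2 + gradJ2 J p ^ 2) * hab

section Solution

variable {J : ℝ × ℝ → ℝ} {k1 k2 : ℝ} {γ : ℝ → (ℝ × ℝ) × (ℝ × ℝ)}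

theorem heading_sq_add_sq_eq
    (hγ : ∀ t ∈ Ici (0 : ℝ), HasDerivAt γ (unicycleField J k1 k2 (γ t)) t) {t : ℝ}
    (ht : t ∈ Ici 0) :
    (γ t).2.1 ^ 2 + (γ t).2.2 ^ 2 = (γ 0).2.1 ^ 2 + (γ 0).2.2 ^ 2 := by
  have hderiv : ∀ s ∈ Ici (0 : ℝ),
      HasDerivWithinAt (fun s => (γ s).2.1 ^ 2 + (γ s).2.2 ^ 2) 0 (Ici 0) s := by
    intro s hs
    have hv := (hγ s hs).snd
    refine (((hv.fst.fun_pow 2).add (hv.snd.fun_pow 2)).congr_deriv ?_).hasDerivWithinAt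
    simp only [unicycleField, Prod.smul_mk, smul_eq_mul]
    ring
  have := (convex_Ici 0).norm_image_sub_le_of_norm_hasDerivWithin_le hderiv (C := 0)
    (fun _ _ => by simp) self_mem_Ici ht
  simpa [sub_eq_zero] using this

theorem hasDerivAt_comp_position (hJ : Differentiable ℝ J)
    (hγ : ∀ t ∈ Ici (0 : ℝ), HasDerivAt γ (unicycleField J k1 k2 (γ t)) t) {t : ℝ}
    (ht : t ∈ Ici 0) : HasDerivAt (fun s => J (γ s).1) (k1 * headingDeriv J (γ t) ^ 2) t := by
  refine ((hJ (γ t).1).hasFDerivAt.comp_hasDerivAt (f := fun s => (γ s).1) t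
    (hγ t ht).fst).congr_deriv ?_
  simp only [unicycleField, headingDeriv, map_smul, smul_eq_mul]
  ring

theorem monotoneOn_comp_position (hJ : Differentiable ℝ J) (hk1 : 0 ≤ k1)
    (hγ : ∀ t ∈ Ici (0 : ℝ), HasDerivAt γ (unicycleField J k1 k2 (γ t)) t) :
    MonotoneOn (fun s => J (γ s).1) (Ici 0) :=
  monotoneOn_of_hasDerivWithinAt_nonneg (convex_Ici 0)
    (fun t ht => (hasDerivAt_comp_position hJ hγ ht).continuousAt.continuousWithinAt)
    (fun t ht => (hasDerivAt_comp_position hJ hγ (interior_subset ht)).hasDerivWithinAt)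
    fun t _ => by positivity

theorem hasDerivAt_headingDeriv_comp (hJ : ContDiff ℝ 2 J)
    (hγ : ∀ t ∈ Ici (0 : ℝ), HasDerivAt γ (unicycleField J k1 k2 (γ t)) t) {t : ℝ}
    (ht : t ∈ Ici 0) :
    HasDerivAt (fun s => headingDeriv J (γ s))
      (k1 * headingDeriv J (γ t) * fderiv ℝ (fderiv ℝ J) (γ t).1 (γ t).2 (γ t).2 +
        -(k2 * normalDeriv J (γ t) ^ 2)) t := by
  have hD : HasFDerivAt (fderiv ℝ J) (fderiv ℝ (fderiv ℝ J) (γ t).1) (γ t).1 :=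
    ((hJ.fderiv_right (m := 1) (by norm_num)).differentiable one_ne_zero _).hasFDerivAt
  refine ((hD.comp_hasDerivAt (f := fun s => (γ s).1) t (hγ t ht).fst).clm_apply
    (hγ t ht).snd).congr_deriv ?_
  have hperp : ((γ t).2.2, -(γ t).2.1) = -(-(γ t).2.2, (γ t).2.1) := by simp
  simp only [unicycleField, headingDeriv, normalDeriv, Function.comp_apply, map_smul,
    smul_apply, smul_eq_mul, hperp, map_neg]
  ring

theorem tendsto_headingDeriv_comp (hJ : ContDiff ℝ 1 J) (hJb : BddAbove (range J))
    (hk1 : 0 < k1) (hγ : ∀ t ∈ Ici (0 : ℝ), HasDerivAt γ (unicycleField J k1 k2 (γ t)) t)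
    {S : Set ((ℝ × ℝ) × (ℝ × ℝ))} (hS : IsCompact S) (hγS : MapsTo γ (Ici 0) S) :
    Tendsto (fun t => headingDeriv J (γ t)) atTop (𝓝 0) := by
  have hJd := hJ.differentiable one_ne_zero
  obtain ⟨L, hL⟩ := (monotoneOn_comp_position hJd hk1.le hγ).exists_tendsto_atTop_of_bddAbove
    (hJb.mono (range_comp_subset_range _ J))
  have hu := continuous_headingDeriv hJ
  have huc : UniformContinuousOn ((fun x => k1 * headingDeriv J x ^ 2) ∘ γ) (Ici 0) :=
    uniformContinuousOn_comp_of_hasDerivAt_of_isCompact hS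
      (continuous_unicycleField hJ k1 k2).continuousOn hγS hγ (by fun_prop)
  refine tendsto_zero_of_tendsto_const_mul_sq hk1.ne'
    (tendsto_zero_of_hasDerivAt_add_of_uniformContinuousOn hL tendsto_const_nhds huc
      fun t ht => ?_)
  simpa using hasDerivAt_comp_position hJd hγ ht

theorem tendsto_normalDeriv_comp (hJ : ContDiff ℝ 2 J) (hk2 : 0 < k2)
    (hγ : ∀ t ∈ Ici (0 : ℝ), HasDerivAt γ (unicycleField J k1 k2 (γ t)) t)
    {S : Set ((ℝ × ℝ) × (ℝ × ℝ))} (hS : IsCompact S) (hγS : MapsTo γ (Ici 0) S)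
    (hu : Tendsto (fun t => headingDeriv J (γ t)) atTop (𝓝 0)) :
    Tendsto (fun t => normalDeriv J (γ t)) atTop (𝓝 0) := by
  have hJ1 : ContDiff ℝ 1 J := hJ.of_le (by norm_num)
  have hq : Continuous fun x : (ℝ × ℝ) × (ℝ × ℝ) => fderiv ℝ (fderiv ℝ J) x.1 x.2 x.2 :=
    ((((hJ.fderiv_right (m := 1) (by norm_num)).continuous_fderiv one_ne_zero).comp
      continuous_fst).clm_apply continuous_snd).clm_apply continuous_snd
  obtain ⟨C, hC⟩ := hS.exists_bound_of_continuousOn hq.continuousOn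
  have hr : Tendsto (fun t => k1 * headingDeriv J (γ t) *
      fderiv ℝ (fderiv ℝ J) (γ t).1 (γ t).2 (γ t).2) atTop (𝓝 0) := by
    refine (by simpa using hu.const_mul k1 : Tendsto (fun t => k1 * headingDeriv J (γ t))
      atTop (𝓝 0)).zero_mul_isBoundedUnder_le (isBoundedUnder_of_eventually_le (a := C) ?_)
    filter_upwards [eventually_ge_atTop 0] with t ht
    exact hC _ (hγS ht)
  have hw := continuous_normalDeriv hJ1
  have hwc : UniformContinuousOn ((fun x => -(k2 * normalDeriv J x ^ 2)) ∘ γ) (Ici 0) :=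
    uniformContinuousOn_comp_of_hasDerivAt_of_isCompact hS
      (continuous_unicycleField hJ1 k1 k2).continuousOn hγS hγ (by fun_prop)
  have := tendsto_zero_of_hasDerivAt_add_of_uniformContinuousOn hu hr hwc
    fun t ht => hasDerivAt_headingDeriv_comp hJ hγ ht
  exact tendsto_zero_of_tendsto_const_mul_sq hk2.ne' (by simpa using this.neg)

end Solution

/-- For `J` twice continuously differentiable, strictly concave, radially
unbounded with global maximum at `pstar`, every solution of the closed-loop system defined
for all `t ≥ 0` starting on the unit circle in `(z3, z4)` converges to the source. -/
theorem stmt0 (J : ℝ × ℝ → ℝ) (hJ : ContDiff ℝ 2 J)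
    (hconc : StrictConcaveOn ℝ Set.univ J)
    (hrad : Tendsto J (comap (fun p : ℝ × ℝ => ‖p‖) atTop) atBot)
    (pstar : ℝ × ℝ) (hmax : ∀ p : ℝ × ℝ, J p ≤ J pstar)
    (k1 k2 : ℝ) (hk1 : 0 < k1) (hk2 : 0 < k2)
    (z1 z2 z3 z4 : ℝ → ℝ)
    (hsol : ClosedLoop J k1 k2 z1 z2 z3 z4 (Set.Ici 0))
    (hinit : z3 0 ^ 2 + z4 0 ^ 2 = 1) :
    Tendsto (fun t => (z1 t, z2 t)) atTop (nhds pstar) := by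
  set γ : ℝ → (ℝ × ℝ) × (ℝ × ℝ) := fun t => ((z1 t, z2 t), (z3 t, z4 t))
  have hγ : ∀ t ∈ Ici (0 : ℝ), HasDerivAt γ (unicycleField J k1 k2 (γ t)) t :=
    fun t ht => hsol.hasDerivAt_unicycleField ht
  have hJ1 : ContDiff ℝ 1 J := hJ.of_le (by norm_num)
  have hunit (t : ℝ) (ht : t ∈ Ici 0) : z3 t ^ 2 + z4 t ^ 2 = 1 :=
    (heading_sq_add_sq_eq hγ ht).trans hinit
  set K := {p : ℝ × ℝ | J (z1 0, z2 0) ≤ J p}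
  have hK : IsCompact K := isCompact_setOf_le_of_tendsto_cocompact_atBot hJ.continuous
    (by rwa [comap_norm_atTop, Metric.cobounded_eq_cocompact] at hrad) _
  have hpK : MapsTo (fun t => (z1 t, z2 t)) (Ici 0) K := fun t ht =>
    monotoneOn_comp_position (hJ1.differentiable one_ne_zero) hk1.le hγ self_mem_Ici ht ht
  have hγS : MapsTo γ (Ici 0) (K ×ˢ Metric.closedBall 0 1) := fun t ht =>
    ⟨hpK ht, mem_closedBall_zero_iff.2 (norm_le_one_of_sq_add_sq_eq_one (hunit t ht))⟩
  have hS := hK.prod (isCompact_closedBall (0 : ℝ × ℝ) 1)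
  have hu := tendsto_headingDeriv_comp hJ1 ⟨J pstar, by rintro _ ⟨p, rfl⟩; exact hmax p⟩ hk1 hγ
    hS hγS
  have hw := tendsto_normalDeriv_comp hJ hk2 hγ hS hγS hu
  refine tendsto_of_tendsto_gradJ_sq_add_sq hJ1 hconc hmax hK
    (eventually_atTop.2 ⟨0, fun t ht => hpK ht⟩) ?_
  have hsum : Tendsto (fun t => headingDeriv J (γ t) ^ 2 + normalDeriv J (γ t) ^ 2) atTop
      (𝓝 0) := by simpa using (hu.pow 2).add (hw.pow 2)
  refine hsum.congr' ?_
  filter_upwards [eventually_ge_atTop 0] with t ht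
  exact (gradJ_sq_add_sq_eq J _ (hunit t ht)).symm
end

section
/- Let J : ℝ² → ℝ be twice continuously differentiable, radially unbounded (J(p) → −∞ as ‖p‖ → ∞) and bounded above. Then every solution t ↦ (z1(t), z2(t), z3(t), z4(t)) of the closed-loop system defined on [0, ∞) has bounded range; in particular t ↦ (z1(t), z2(t)) remains in a compact subset of ℝ² for all t ≥ 0. -/
open Real Filter

/-!
Along a solution, `d/dt J(z1, z2) = k1 ⟨∇J, (z3, z4)⟩² ≥ 0` and `d/dt (z3² + z4²) = 0`. Hence
`(z1, z2)` never leaves the superlevel set `{J ≥ J(z1 0, z2 0)}`, which is compact because `J` is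
continuous and radially unbounded, while the heading `(z3, z4)` stays on a circle.
-/

lemma monotoneOn_of_hasDerivAt_nonneg {s : Set ℝ} (hs : Convex ℝ s) {f f' : ℝ → ℝ}
    (hf : ∀ t ∈ s, HasDerivAt f (f' t) t) (hf' : ∀ t ∈ s, 0 ≤ f' t) : MonotoneOn f s :=
  monotoneOn_of_hasDerivWithinAt_nonneg hs
    (fun t ht => (hf t ht).continuousAt.continuousWithinAt)
    (fun t ht => (hf t (interior_subset ht)).hasDerivWithinAt)
    (fun t ht => hf' t (interior_subset ht))

lemma hasDerivAt_comp_prodMk {J : ℝ × ℝ → ℝ} {x y : ℝ → ℝ} {x' y' t : ℝ}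
    (hJ : DifferentiableAt ℝ J (x t, y t)) (hx : HasDerivAt x x' t) (hy : HasDerivAt y y' t) :
    HasDerivAt (fun t => J (x t, y t))
      (gradJ1 J (x t, y t) * x' + gradJ2 J (x t, y t) * y') t := by
  refine (hJ.hasFDerivAt.comp_hasDerivAt t (hx.prodMk hy)).congr_deriv ?_
  have hbasis : ((x', y') : ℝ × ℝ) = x' • ((1 : ℝ), (0 : ℝ)) + y' • ((0 : ℝ), (1 : ℝ)) := by
    simp
  rw [hbasis, map_add, map_smul, map_smul, smul_eq_mul, smul_eq_mul, gradJ1, gradJ2]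
  ring

lemma isBounded_superlevel_of_tendsto_atBot {E : Type*} [NormedAddCommGroup E] {J : E → ℝ}
    (hrad : Tendsto J (comap (fun p : E => ‖p‖) atTop) atBot) (c : ℝ) :
    Bornology.IsBounded {p | c ≤ J p} := by
  rw [comap_norm_atTop] at hrad
  rw [Bornology.isBounded_def, Set.compl_ofPred]
  simp only [not_le]
  exact hrad.eventually (eventually_lt_atBot c)

lemma norm_prod_prod_eq_max (a b c d : ℝ) : ‖(a, b, c, d)‖ = max ‖(a, b)‖ ‖(c, d)‖ := by
  simp only [Prod.norm_def, max_assoc]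

lemma norm_prod_le_sqrt (a b : ℝ) : ‖(a, b)‖ ≤ √(a ^ 2 + b ^ 2) := by
  rw [Prod.norm_def, Real.norm_eq_abs, Real.norm_eq_abs]
  exact max_le (Real.abs_le_sqrt (by nlinarith)) (Real.abs_le_sqrt (by nlinarith))

namespace ClosedLoop

variable {J : ℝ × ℝ → ℝ} {k1 k2 : ℝ} {z1 z2 z3 z4 : ℝ → ℝ} {s : Set ℝ}

lemma hasDerivAt_objective (hJ : Differentiable ℝ J) (hsol : ClosedLoop J k1 k2 z1 z2 z3 z4 s)
    {t : ℝ} (ht : t ∈ s) :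
    HasDerivAt (fun t => J (z1 t, z2 t))
      (k1 * (gradJ1 J (z1 t, z2 t) * z3 t + gradJ2 J (z1 t, z2 t) * z4 t) ^ 2) t := by
  obtain ⟨h1, h2, -, -⟩ := hsol t ht
  refine (hasDerivAt_comp_prodMk (hJ _) h1 h2).congr_deriv ?_
  ring

lemma monotoneOn_objective (hJ : Differentiable ℝ J) (hk1 : 0 ≤ k1) (hs : Convex ℝ s)
    (hsol : ClosedLoop J k1 k2 z1 z2 z3 z4 s) : MonotoneOn (fun t => J (z1 t, z2 t)) s :=
  monotoneOn_of_hasDerivAt_nonneg hs (fun _ ht => hsol.hasDerivAt_objective hJ ht)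
    (fun _ _ => by positivity)

lemma hasDerivAt_heading_sq (hsol : ClosedLoop J k1 k2 z1 z2 z3 z4 s) {t : ℝ} (ht : t ∈ s) :
    HasDerivAt (fun t => z3 t ^ 2 + z4 t ^ 2) 0 t := by
  obtain ⟨-, -, h3, h4⟩ := hsol t ht
  refine ((h3.fun_pow 2).add (h4.fun_pow 2)).congr_deriv ?_
  ring

lemma heading_sq_eq (hs : Convex ℝ s) (hsol : ClosedLoop J k1 k2 z1 z2 z3 z4 s)
    {t₀ t : ℝ} (ht₀ : t₀ ∈ s) (ht : t ∈ s) :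
    z3 t ^ 2 + z4 t ^ 2 = z3 t₀ ^ 2 + z4 t₀ ^ 2 := by
  have hmono := monotoneOn_of_hasDerivAt_nonneg hs
    (fun _ ht => hsol.hasDerivAt_heading_sq ht) (fun _ _ => le_rfl)
  have hanti := monotoneOn_of_hasDerivAt_nonneg hs
    (fun _ ht => (hsol.hasDerivAt_heading_sq ht).neg) (fun _ _ => neg_zero.ge)
  rcases le_total t₀ t with h | h
  · exact le_antisymm (neg_le_neg_iff.mp (hanti ht₀ ht h)) (hmono ht₀ ht h)
  · exact le_antisymm (hmono ht ht₀ h) (neg_le_neg_iff.mp (hanti ht ht₀ h))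

end ClosedLoop

theorem stmt2_general (J : ℝ × ℝ → ℝ) (hJ : ContDiff ℝ 2 J)
    (hrad : Tendsto J (comap (fun p : ℝ × ℝ => ‖p‖) atTop) atBot)
    (k1 k2 : ℝ) (hk1 : 0 < k1)
    (z1 z2 z3 z4 : ℝ → ℝ)
    (hsol : ClosedLoop J k1 k2 z1 z2 z3 z4 (Set.Ici 0)) :
    (∃ C : ℝ, ∀ t ≥ (0 : ℝ), ‖(z1 t, z2 t, z3 t, z4 t)‖ ≤ C) ∧
      ∃ K : Set (ℝ × ℝ), IsCompact K ∧ ∀ t ≥ (0 : ℝ), (z1 t, z2 t) ∈ K := by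
  set K := {p | J (z1 0, z2 0) ≤ J p}
  have hK : IsCompact K := Metric.isCompact_of_isClosed_isBounded
    (isClosed_le continuous_const hJ.continuous) (isBounded_superlevel_of_tendsto_atBot hrad _)
  have hmem : ∀ t ≥ (0 : ℝ), (z1 t, z2 t) ∈ K := fun t ht =>
    hsol.monotoneOn_objective (hJ.differentiable two_ne_zero) hk1.le (convex_Ici 0)
      Set.self_mem_Ici ht ht
  obtain ⟨R, hR⟩ := hK.isBounded.exists_norm_le
  refine ⟨⟨max R √(z3 0 ^ 2 + z4 0 ^ 2), fun t ht => ?_⟩, K, hK, hmem⟩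
  rw [norm_prod_prod_eq_max]
  refine max_le_max (hR _ (hmem t ht)) ?_
  rw [← hsol.heading_sq_eq (convex_Ici 0) Set.self_mem_Ici ht]
  exact norm_prod_le_sqrt _ _

/-- For `J` twice continuously differentiable, radially unbounded and bounded
above, every solution of the closed-loop system on `[0,∞)` has bounded range; in particular
`(z1, z2)` stays in a compact subset of `ℝ²` for all `t ≥ 0`. -/
theorem stmt2 (J : ℝ × ℝ → ℝ) (hJ : ContDiff ℝ 2 J)
    (hrad : Tendsto J (comap (fun p : ℝ × ℝ => ‖p‖) atTop) atBot)
    (hbdd : ∃ B : ℝ, ∀ p : ℝ × ℝ, J p ≤ B)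
    (k1 k2 : ℝ) (hk1 : 0 < k1) (hk2 : 0 < k2)
    (z1 z2 z3 z4 : ℝ → ℝ)
    (hsol : ClosedLoop J k1 k2 z1 z2 z3 z4 (Set.Ici 0)) :
    (∃ C : ℝ, ∀ t ≥ (0 : ℝ), ‖(z1 t, z2 t, z3 t, z4 t)‖ ≤ C) ∧
      ∃ K : Set (ℝ × ℝ), IsCompact K ∧ ∀ t ≥ (0 : ℝ), (z1 t, z2 t) ∈ K :=
  stmt2_general J hJ hrad k1 k2 hk1 z1 z2 z3 z4 hsol
end

section
/- Let J : ℝ² → ℝ be twice continuously differentiable with Hessian ∇²J. Along any differentiable solution t ↦ (z1(t), z2(t), z3(t), z4(t)) of the closed-loop system, the function S(t) = ⟨∇J(z1(t), z2(t)), (z3(t), z4(t))⟩ is differentiable and satisfies dS/dt = k1 S(t) · (z3(t), z4(t))ᵀ ∇²J(z1(t), z2(t)) (z3(t), z4(t)) + k2 ⟨∇J(z1(t), z2(t)), (z4(t), −z3(t))⟩ · ⟨∇J⊥(z1(t), z2(t)), (z3(t), z4(t))⟩. -/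
open Real Filter

noncomputable def hessQuad (J : ℝ × ℝ → ℝ) (p v : ℝ × ℝ) : ℝ :=
  fderiv ℝ (fun q => fderiv ℝ J q) p v v

/- Writing `S(t) = dJ_{c(t)} (v(t))` with `c = (z1, z2)` and `v = (z3, z4)`, the chain and product
rules give `Ṡ = d²J_c (ċ) v + dJ_c (v̇)`. The closed loop makes `ċ = k1 S v` and
`v̇ = k2 ⟨∇J⊥, v⟩ (z4, -z3)`, and linearity turns the two terms into the two summands. -/

theorem HasDerivAt.fderiv_apply {𝕜 E F : Type*} [NontriviallyNormedField 𝕜]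
    [NormedAddCommGroup E] [NormedSpace 𝕜 E] [NormedAddCommGroup F] [NormedSpace 𝕜 F]
    {f : E → F} {c v : 𝕜 → E} {c' v' : E} {t : 𝕜}
    (hf : DifferentiableAt 𝕜 (fderiv 𝕜 f) (c t)) (hc : HasDerivAt c c' t)
    (hv : HasDerivAt v v' t) :
    HasDerivAt (fun s => fderiv 𝕜 f (c s) (v s))
      (fderiv 𝕜 (fderiv 𝕜 f) (c t) c' (v t) + fderiv 𝕜 f (c t) v') t :=
  (hf.hasFDerivAt.comp_hasDerivAt t hc).clm_apply hv

theorem ContinuousLinearMap.apply_prodMk_eq {R M : Type*} [Semiring R] [TopologicalSpace R]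
    [AddCommMonoid M] [Module R M] [TopologicalSpace M] (f : R × R →L[R] M) (a b : R) :
    f (a, b) = a • f (1, 0) + b • f (0, 1) := by
  rw [← map_smul, ← map_smul, ← map_add]
  simp

theorem gradJ1_mul_add_gradJ2_mul (J : ℝ × ℝ → ℝ) (p : ℝ × ℝ) (a b : ℝ) :
    gradJ1 J p * a + gradJ2 J p * b = fderiv ℝ J p (a, b) := by
  rw [ContinuousLinearMap.apply_prodMk_eq, gradJ1, gradJ2, smul_eq_mul, smul_eq_mul,
    mul_comm a, mul_comm b]

theorem stmt5_general (J : ℝ × ℝ → ℝ) (hJ : ContDiff ℝ 2 J)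
    (k1 k2 : ℝ)
    (z1 z2 z3 z4 : ℝ → ℝ)
    (hsol : ClosedLoop J k1 k2 z1 z2 z3 z4 Set.univ) :
    ∀ t : ℝ,
      HasDerivAt
        (fun s => gradJ1 J (z1 s, z2 s) * z3 s + gradJ2 J (z1 s, z2 s) * z4 s)
        (k1 * (gradJ1 J (z1 t, z2 t) * z3 t + gradJ2 J (z1 t, z2 t) * z4 t) *
            hessQuad J (z1 t, z2 t) (z3 t, z4 t) +
          k2 * (gradJ1 J (z1 t, z2 t) * z4 t + gradJ2 J (z1 t, z2 t) * (-z3 t)) *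
            (gradJ2 J (z1 t, z2 t) * z3 t - gradJ1 J (z1 t, z2 t) * z4 t)) t := by
  intro t
  obtain ⟨h1, h2, h3, h4⟩ := hsol t trivial
  have hdJ : DifferentiableAt ℝ (fderiv ℝ J) (z1 t, z2 t) :=
    (hJ.fderiv_right (m := 1) le_rfl).differentiable one_ne_zero _
  set S := gradJ1 J (z1 t, z2 t) * z3 t + gradJ2 J (z1 t, z2 t) * z4 t
  set P := gradJ2 J (z1 t, z2 t) * z3 t - gradJ1 J (z1 t, z2 t) * z4 t
  have hpos : ((k1 * S * z3 t, k1 * S * z4 t) : ℝ × ℝ) = (k1 * S) • (z3 t, z4 t) := by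
    simp [mul_assoc]
  have hdir : ((k2 * P * z4 t, -(k2 * P) * z3 t) : ℝ × ℝ) = (k2 * P) • (z4 t, -z3 t) := by
    simp [mul_assoc]
  simp_rw [gradJ1_mul_add_gradJ2_mul]
  refine (HasDerivAt.fderiv_apply (c := fun s => (z1 s, z2 s)) hdJ (h1.prodMk h2)
    (h3.prodMk h4)).congr_deriv ?_
  rw [hpos, hdir, map_smul, map_smul, smul_apply, hessQuad, smul_eq_mul, smul_eq_mul]
  ring

/-- Along any differentiable solution of the closed-loop system,
`S(t) = ⟨∇J(z1,z2),(z3,z4)⟩` is differentiable with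
`dS/dt = k1 S (z3,z4)ᵀ∇²J(z3,z4) + k2⟨∇J,(z4,−z3)⟩⟨∇J⊥,(z3,z4)⟩`. -/
theorem stmt5 (J : ℝ × ℝ → ℝ) (hJ : ContDiff ℝ 2 J)
    (k1 k2 : ℝ) (hk1 : 0 < k1) (hk2 : 0 < k2)
    (z1 z2 z3 z4 : ℝ → ℝ)
    (hsol : ClosedLoop J k1 k2 z1 z2 z3 z4 Set.univ) :
    ∀ t : ℝ,
      HasDerivAt
        (fun s => gradJ1 J (z1 s, z2 s) * z3 s + gradJ2 J (z1 s, z2 s) * z4 s)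
        (k1 * (gradJ1 J (z1 t, z2 t) * z3 t + gradJ2 J (z1 t, z2 t) * z4 t) *
            hessQuad J (z1 t, z2 t) (z3 t, z4 t) +
          k2 * (gradJ1 J (z1 t, z2 t) * z4 t + gradJ2 J (z1 t, z2 t) * (-z3 t)) *
            (gradJ2 J (z1 t, z2 t) * z3 t - gradJ1 J (z1 t, z2 t) * z4 t)) t :=
  stmt5_general J hJ k1 k2 z1 z2 z3 z4 hsol
end

section
/- Let J : ℝ² → ℝ be twice continuously differentiable and let t ↦ (z1(t), z2(t), z3(t), z4(t)) be a differentiable solution of the closed-loop system. If at some time t₀ one has z3(t₀)² + z4(t₀)² = 1, ∇J(z1(t₀), z2(t₀)) ≠ 0, and ⟨∇J(z1(t₀), z2(t₀)), (z3(t₀), z4(t₀))⟩ = 0, then the derivative of t ↦ ⟨∇J(z1(t), z2(t)), (z3(t), z4(t))⟩ at t₀ is nonzero. -/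
open Real Filter

/-
At an instant where the heading `v = (z3, z4)` is orthogonal to `∇J`, the forward speed
`k1⟨∇J, v⟩` vanishes, so the position is stationary and `t ↦ ∇J(z1, z2)` has zero derivative.
The derivative of `⟨∇J, v⟩` is then `⟨∇J, v̇⟩ = -k2⟨∇J⊥, v⟩²`, and since `v` is a unit vector
orthogonal to `∇J`, Lagrange's identity gives `⟨∇J⊥, v⟩² = |∇J|² > 0`.
-/

theorem differentiable_fderiv_apply {𝕜 E F : Type*} [NontriviallyNormedField 𝕜]
    [NormedAddCommGroup E] [NormedSpace 𝕜 E] [NormedAddCommGroup F] [NormedSpace 𝕜 F]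
    {f : E → F} (hf : ContDiff 𝕜 2 f) (v : E) :
    Differentiable 𝕜 (fun p => fderiv 𝕜 f p v) :=
  ((hf.fderiv_right one_add_one_eq_two.le).clm_apply contDiff_const).differentiable one_ne_zero

theorem DifferentiableAt.hasDerivAt_comp_of_hasDerivAt_zero {𝕜 E F : Type*}
    [NontriviallyNormedField 𝕜] [NormedAddCommGroup E] [NormedSpace 𝕜 E]
    [NormedAddCommGroup F] [NormedSpace 𝕜 F] {g : E → F} {γ : 𝕜 → E} {t : 𝕜}
    (hg : DifferentiableAt 𝕜 g (γ t)) (hγ : HasDerivAt γ 0 t) :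
    HasDerivAt (fun s => g (γ s)) 0 t := by
  simpa [Function.comp_def] using hg.hasFDerivAt.comp_hasDerivAt t hγ

theorem sq_sub_mul_eq_of_mul_add_mul_eq_zero {R : Type*} [CommRing R] {a b c d : R}
    (hperp : a * c + b * d = 0) (hunit : c ^ 2 + d ^ 2 = 1) :
    (b * c - a * d) ^ 2 = a ^ 2 + b ^ 2 := by
  linear_combination (a ^ 2 + b ^ 2) * hunit - (a * c + b * d) * hperp

namespace ClosedLoop

variable {J : ℝ × ℝ → ℝ} {k1 k2 : ℝ} {z1 z2 z3 z4 : ℝ → ℝ} {s : Set ℝ} {t : ℝ}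

theorem hasDerivAt_position_of_perp (hsol : ClosedLoop J k1 k2 z1 z2 z3 z4 s) (ht : t ∈ s)
    (hperp : gradJ1 J (z1 t, z2 t) * z3 t + gradJ2 J (z1 t, z2 t) * z4 t = 0) :
    HasDerivAt (fun s => (z1 s, z2 s)) 0 t := by
  obtain ⟨h1, h2, -, -⟩ := hsol t ht
  rw [hperp, mul_zero, zero_mul] at h1 h2
  exact h1.prodMk h2

theorem hasDerivAt_inner_of_perp (hJ : ContDiff ℝ 2 J)
    (hsol : ClosedLoop J k1 k2 z1 z2 z3 z4 s) (ht : t ∈ s)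
    (hperp : gradJ1 J (z1 t, z2 t) * z3 t + gradJ2 J (z1 t, z2 t) * z4 t = 0) :
    HasDerivAt (fun s => gradJ1 J (z1 s, z2 s) * z3 s + gradJ2 J (z1 s, z2 s) * z4 s)
      (-k2 * (gradJ2 J (z1 t, z2 t) * z3 t - gradJ1 J (z1 t, z2 t) * z4 t) ^ 2) t := by
  have hrest := hsol.hasDerivAt_position_of_perp ht hperp
  have hgrad1 : HasDerivAt (fun s => gradJ1 J (z1 s, z2 s)) 0 t :=
    (differentiable_fderiv_apply hJ (1, 0) _).hasDerivAt_comp_of_hasDerivAt_zero hrest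
  have hgrad2 : HasDerivAt (fun s => gradJ2 J (z1 s, z2 s)) 0 t :=
    (differentiable_fderiv_apply hJ (0, 1) _).hasDerivAt_comp_of_hasDerivAt_zero hrest
  obtain ⟨-, -, h3, h4⟩ := hsol t ht
  exact ((hgrad1.mul h3).add (hgrad2.mul h4)).congr_deriv (by ring)

end ClosedLoop

theorem stmt6_general (J : ℝ × ℝ → ℝ) (hJ : ContDiff ℝ 2 J)
    (k1 k2 : ℝ) (hk2 : 0 < k2)
    (z1 z2 z3 z4 : ℝ → ℝ)
    (hsol : ClosedLoop J k1 k2 z1 z2 z3 z4 Set.univ)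
    (t0 : ℝ)
    (hcircle : z3 t0 ^ 2 + z4 t0 ^ 2 = 1)
    (hgrad : (gradJ1 J (z1 t0, z2 t0), gradJ2 J (z1 t0, z2 t0)) ≠ ((0 : ℝ), (0 : ℝ)))
    (hperp : gradJ1 J (z1 t0, z2 t0) * z3 t0 + gradJ2 J (z1 t0, z2 t0) * z4 t0 = 0) :
    deriv (fun s => gradJ1 J (z1 s, z2 s) * z3 s + gradJ2 J (z1 s, z2 s) * z4 s) t0 ≠ 0 := by
  rw [(hsol.hasDerivAt_inner_of_perp hJ trivial hperp).deriv,
    sq_sub_mul_eq_of_mul_add_mul_eq_zero hperp hcircle]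
  have hnorm : 0 < gradJ1 J (z1 t0, z2 t0) ^ 2 + gradJ2 J (z1 t0, z2 t0) ^ 2 := by
    by_contra! h
    exact hgrad (Prod.ext (by nlinarith [sq_nonneg (gradJ1 J (z1 t0, z2 t0))])
      (by nlinarith [sq_nonneg (gradJ2 J (z1 t0, z2 t0))]))
  exact (mul_neg_of_neg_of_pos (neg_neg_of_pos hk2) hnorm).ne

/-- If at some time `t₀` the solution satisfies `z3² + z4² = 1`,
`∇J(z1,z2) ≠ 0` and `⟨∇J(z1,z2),(z3,z4)⟩ = 0`, then the derivative of
`t ↦ ⟨∇J(z1(t),z2(t)),(z3(t),z4(t))⟩` at `t₀` is nonzero. -/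
theorem stmt6 (J : ℝ × ℝ → ℝ) (hJ : ContDiff ℝ 2 J)
    (k1 k2 : ℝ) (hk1 : 0 < k1) (hk2 : 0 < k2)
    (z1 z2 z3 z4 : ℝ → ℝ)
    (hsol : ClosedLoop J k1 k2 z1 z2 z3 z4 Set.univ)
    (t0 : ℝ)
    (hcircle : z3 t0 ^ 2 + z4 t0 ^ 2 = 1)
    (hgrad : (gradJ1 J (z1 t0, z2 t0), gradJ2 J (z1 t0, z2 t0)) ≠ ((0 : ℝ), (0 : ℝ)))
    (hperp : gradJ1 J (z1 t0, z2 t0) * z3 t0 + gradJ2 J (z1 t0, z2 t0) * z4 t0 = 0) :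
    deriv (fun s => gradJ1 J (z1 s, z2 s) * z3 s + gradJ2 J (z1 s, z2 s) * z4 s) t0 ≠ 0 :=
  stmt6_general J hJ k1 k2 hk2 z1 z2 z3 z4 hsol t0 hcircle hgrad hperp
end
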